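/- arXiv:0904.1053 — 2 statements merged into one kernel-verified Lean document; each statement's English description precedes it below -/
import Mathlib

section
/- The improper integral ∫_0^∞ ( ψ(t+1) - 1/(2(t+1)) - log t ) dt converges and equals (1/2) log(2π). -/
/-!
With `G t = log Γ (t + 1) - t log t + t - log (2 (t + 1)) / 2` the integrand is `G'`,
`G 0 = -log 2 / 2`, and Stirling's formula gives `G n → log π / 2`. The integrand is nonnegative
because `ψ (t + 1) ≥ log (t + 1/2)`, which comes from the log-convexity of `Γ` and the
recurrence `ψ (x + 1) = ψ x + 1 / x`. Hence `G` is monotone, so it tends to `log π / 2` along the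
reals too, and the integral is `log π / 2 + log 2 / 2`.
-/

open Real MeasureTheory Filter

/-- The digamma function `ψ = Γ'/Γ`. -/
noncomputable def digamma (x : ℝ) : ℝ := deriv Real.Gamma x / Real.Gamma x

open Set Topology

lemma div_add_half_le_log_add_sub_log {a h : ℝ} (ha : 0 < a) (hh : 0 < h) :
    h / (a + h / 2) ≤ log (a + h) - log a := by
  have hsum := hasSum_log_one_add_inv (div_pos ha hh)
  have hfirst := le_hasSum hsum 0 fun k _ => by positivity
  have hlog : log (1 + (a / h)⁻¹) = log (a + h) - log a := by
    rw [← log_div (by positivity) ha.ne']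
    congr 1
    field_simp
  have hterm : 2 * (1 / (2 * ((0 : ℕ) : ℝ) + 1)) * (1 / (2 * (a / h) + 1)) ^ (2 * 0 + 1)
      = h / (a + h / 2) := by
    norm_num
    field_simp
  rwa [hlog, hterm] at hfirst

lemma hasDerivAt_log_Gamma {x : ℝ} (hx : 0 < x) :
    HasDerivAt (fun y => log (Gamma y)) (digamma x) x :=
  (differentiableOn_Gamma_Ioi.differentiableAt (Ioi_mem_nhds hx)).hasDerivAt.log
    (Gamma_pos_of_pos hx).ne'

lemma digamma_add_one {x : ℝ} (hx : 0 < x) : digamma (x + 1) = digamma x + x⁻¹ := by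
  have hshift : HasDerivAt (fun y => log (Gamma (y + 1))) (digamma (x + 1)) x :=
    (hasDerivAt_log_Gamma (by linarith)).comp_add_const x 1
  have hfeq : HasDerivAt (fun y => log (Gamma (y + 1))) (digamma x + x⁻¹) x := by
    refine ((hasDerivAt_log_Gamma hx).add (hasDerivAt_log hx.ne')).congr_of_eventuallyEq ?_
    filter_upwards [eventually_gt_nhds hx] with y hy
    rw [Gamma_add_one hy.ne', log_mul hy.ne' (Gamma_pos_of_pos hy).ne', add_comm]
    rfl
  exact hshift.unique hfeq

lemma log_le_digamma_add_one {x : ℝ} (hx : 0 < x) : log x ≤ digamma (x + 1) := by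
  have hslope := convexOn_log_Gamma.slope_le_of_hasDerivAt hx (mem_Ioi.mpr (by linarith))
    (lt_add_one x) (hasDerivAt_log_Gamma (by linarith))
  rwa [slope_def_field, add_sub_cancel_left, div_one, Function.comp_apply, Function.comp_apply,
    Gamma_add_one hx.ne', log_mul hx.ne' (Gamma_pos_of_pos hx).ne', add_sub_cancel_right] at hslope

/-- `ψ (x + 1) - log (x + 1/2)` decreases under `x ↦ x + 1` (midpoint rule) and is squeezed to
`0` along `x + n` by `log_le_digamma_add_one`. -/
lemma log_add_half_le_digamma_add_one {x : ℝ} (hx : 0 < x) :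
    log (x + 1 / 2) ≤ digamma (x + 1) := by
  have hstep : ∀ y, 0 < y →
      digamma (y + 1 + 1) - log (y + 1 + 1 / 2) ≤ digamma (y + 1) - log (y + 1 / 2) := by
    intro y hy
    have hmid := div_add_half_le_log_add_sub_log (a := y + 1 / 2) (by linarith) one_pos
    rw [digamma_add_one (by linarith)]
    rw [show y + 1 / 2 + 1 / 2 = y + 1 by ring, show y + 1 / 2 + 1 = y + 1 + 1 / 2 by ring] at hmid
    linarith [one_div (y + 1)]
  have hshift : ∀ n : ℕ,
      digamma (x + n + 1) - log (x + n + 1 / 2) ≤ digamma (x + 1) - log (x + 1 / 2) := by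
    intro n
    induction n with
    | zero => simp
    | succ n ih =>
      push_cast
      rw [← add_assoc]
      exact (hstep _ (by positivity)).trans ih
  have hgap : Tendsto (fun n : ℕ => log (x + n + 1 / 2) - log (x + n)) atTop (𝓝 0) :=
    (tendsto_log_comp_add_sub_log _).comp
      (tendsto_atTop_add_const_left _ x tendsto_natCast_atTop_atTop)
  have hbound : ∀ n : ℕ,
      log (x + 1 / 2) - digamma (x + 1) ≤ log (x + n + 1 / 2) - log (x + n) :=
    fun n => by linarith [hshift n, log_le_digamma_add_one (x := x + n) (by positivity)]
  linarith [ge_of_tendsto' hgap hbound]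

lemma digamma_add_one_sub_sub_log_nonneg {t : ℝ} (ht : 0 < t) :
    0 ≤ digamma (t + 1) - 1 / (2 * (t + 1)) - log t := by
  have hmid := div_add_half_le_log_add_sub_log ht one_half_pos
  have hcoef : 1 / (2 * (t + 1)) ≤ 1 / 2 / (t + 1 / 2 / 2) := by
    rw [div_div, div_le_div_iff_of_pos_left one_pos (by positivity) (by positivity)]
    linarith
  linarith [log_add_half_le_digamma_add_one ht]

lemma Filter.Tendsto.of_monotoneOn_Ici_of_natCast {α : Type*} [TopologicalSpace α]
    [LinearOrder α] [OrderTopology α] {f : ℝ → α} {l : α} (hf : MonotoneOn f (Ici 0))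
    (hlim : Tendsto (fun n : ℕ => f n) atTop (𝓝 l)) : Tendsto f atTop (𝓝 l) := by
  refine tendsto_of_tendsto_of_tendsto_of_le_of_le'
    (hlim.comp tendsto_nat_floor_atTop)
    ((hlim.comp (tendsto_add_atTop_nat 1)).comp tendsto_nat_floor_atTop) ?_ ?_
  all_goals filter_upwards [eventually_ge_atTop 0] with t ht
  · exact hf (mem_Ici.mpr (Nat.cast_nonneg _)) ht (Nat.floor_le ht)
  · refine hf ht (mem_Ici.mpr (Nat.cast_nonneg _)) ?_
    exact_mod_cast (Nat.lt_floor_add_one t).le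

/-- `log Γ (t + 1)` minus Stirling's approximation `t log t - t + log (2πt) / 2`, with `2πt`
replaced by `2 (t + 1)` to keep the value at `0` finite. -/
noncomputable def logGammaSubStirling (t : ℝ) : ℝ :=
  log (Gamma (t + 1)) - t * log t + t - log (2 * (t + 1)) / 2

lemma logGammaSubStirling_zero : logGammaSubStirling 0 = -(log 2 / 2) := by
  simp [logGammaSubStirling]

lemma hasDerivAt_logGammaSubStirling {t : ℝ} (ht : 0 < t) :
    HasDerivAt logGammaSubStirling (digamma (t + 1) - 1 / (2 * (t + 1)) - log t) t := by
  have hlogGamma := (hasDerivAt_log_Gamma (by linarith)).comp_add_const t 1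
  have hlog : HasDerivAt (fun y => log (2 * (y + 1)) / 2) (1 / (2 * (t + 1))) t :=
    ((((hasDerivAt_id' t).add_const 1).const_mul 2).log (by positivity)).div_const 2
      |>.congr_deriv (by field_simp)
  refine (((hlogGamma.sub (hasDerivAt_mul_log ht.ne')).add (hasDerivAt_id' t)).sub hlog)
    |>.congr_deriv ?_
  ring

lemma continuousAt_logGammaSubStirling {t : ℝ} (ht : 0 ≤ t) :
    ContinuousAt logGammaSubStirling t := by
  have hlogGamma := ((hasDerivAt_log_Gamma (by linarith)).comp_add_const t 1).continuousAt
  have hlog : ContinuousAt (fun y => log (2 * (y + 1))) t :=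
    ContinuousAt.log (by fun_prop) (by positivity)
  exact ((hlogGamma.sub continuous_mul_log.continuousAt).add continuousAt_id).sub
    (hlog.div_const 2)

lemma monotoneOn_logGammaSubStirling : MonotoneOn logGammaSubStirling (Ici 0) := by
  refine monotoneOn_of_hasDerivWithinAt_nonneg (convex_Ici 0)
    (f' := fun t => digamma (t + 1) - 1 / (2 * (t + 1)) - log t)
    (fun t ht => (continuousAt_logGammaSubStirling ht).continuousWithinAt) ?_ ?_
  all_goals rw [interior_Ici]; intro t ht
  exacts [(hasDerivAt_logGammaSubStirling ht).hasDerivWithinAt,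
    digamma_add_one_sub_sub_log_nonneg ht]

/-- On naturals this is `log (stirlingSeq n) + log (n / (n + 1)) / 2`. -/
lemma tendsto_logGammaSubStirling_natCast :
    Tendsto (fun n : ℕ => logGammaSubStirling n) atTop (𝓝 (log π / 2)) := by
  have hstirling :
      Tendsto (fun n : ℕ => log (Stirling.stirlingSeq n)) atTop (𝓝 (log π / 2)) := by
    rw [← log_sqrt pi_pos.le]
    exact (continuousAt_log (sqrt_pos.mpr pi_pos).ne').tendsto.comp
      Stirling.tendsto_stirlingSeq_sqrt_pi
  have hratio : Tendsto (fun n : ℕ => log (n / (n + 1)) / 2) atTop (𝓝 0) := by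
    simpa using ((continuousAt_log one_ne_zero).tendsto.comp
      (tendsto_natCast_div_add_atTop (1 : ℝ))).div_const 2
  refine (by simpa using hstirling.add hratio : Tendsto _ _ _).congr' ?_
  filter_upwards [eventually_ge_atTop 1] with n hn
  have hn : (0 : ℝ) < n := by exact_mod_cast hn
  rw [Stirling.log_stirlingSeq_formula, logGammaSubStirling, Gamma_nat_eq_factorial,
    log_div hn.ne' (by positivity : (n : ℝ) + 1 ≠ 0), log_div hn.ne' (exp_pos 1).ne', log_exp,
    log_mul two_ne_zero hn.ne', log_mul two_ne_zero (by positivity)]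
  ring

lemma tendsto_logGammaSubStirling : Tendsto logGammaSubStirling atTop (𝓝 (log π / 2)) :=
  tendsto_logGammaSubStirling_natCast.of_monotoneOn_Ici_of_natCast monotoneOn_logGammaSubStirling

theorem integral_digamma_sub_log :
    IntegrableOn (fun t : ℝ => digamma (t + 1) - 1 / (2 * (t + 1)) - Real.log t)
      (Set.Ioi (0 : ℝ)) ∧
    ∫ t in Set.Ioi (0 : ℝ), (digamma (t + 1) - 1 / (2 * (t + 1)) - Real.log t)
      = (1 / 2) * Real.log (2 * π) := by
  have hcont := (continuousAt_logGammaSubStirling le_rfl).continuousWithinAt (s := Ici 0)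
  have hderiv : ∀ t ∈ Ioi (0 : ℝ), HasDerivAt logGammaSubStirling
      (digamma (t + 1) - 1 / (2 * (t + 1)) - log t) t :=
    fun t ht => hasDerivAt_logGammaSubStirling ht
  have hnonneg : ∀ t ∈ Ioi (0 : ℝ), 0 ≤ digamma (t + 1) - 1 / (2 * (t + 1)) - log t :=
    fun t ht => digamma_add_one_sub_sub_log_nonneg ht
  refine ⟨integrableOn_Ioi_deriv_of_nonneg hcont hderiv hnonneg tendsto_logGammaSubStirling, ?_⟩
  rw [integral_Ioi_of_hasDerivAt_of_nonneg hcont hderiv hnonneg tendsto_logGammaSubStirling,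
    logGammaSubStirling_zero, log_mul two_ne_zero pi_ne_zero]
  ring
end

section
/- For all real a > 0 and t > 0, ∫_0^∞ { ( 1/(e^u - 1) - 1/u + 1/2 ) e^{-tu}/u + (e^{-ua} - e^{-tu})/(2u) } du = log Γ(t) - (t - 1/2) log t + t - (1/2) log(2π) + (1/2) log(t/a). -/
/-!
Write `μ t` for the integral of `kernel u * exp (-(t * u)) / u`; the rest of the integrand is a
Frullani integral, worth `log (t / a) / 2`. By Fubini, `μ t - μ (t + 1)` is the integral over
`[t, t + 1]` of the Laplace transform `K` of the kernel, and `K s - K (s + 1)` is elementary.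
Hence `μ t - μ (t + 1) - G t` is `1`-periodic for `G t = (t + 1/2) log (1 + 1/t) - 1`, and
it vanishes because it tends to `0` at infinity. Thus `μ t = ∑ₙ G (t + n)`, and the partial sums
of this series converge to `log Γ(t) - (t - 1/2) log t + t - log (2π) / 2` by the Euler limit
formula for `log Γ` and Stirling's formula for `n!`.
-/

open Real MeasureTheory Filter Set Topology

lemma integrableOn_exp_neg_mul_Ioi {b : ℝ} (hb : 0 < b) :
    IntegrableOn (fun u : ℝ => exp (-(b * u))) (Ioi 0) := by
  simpa only [neg_mul] using exp_neg_integrableOn_Ioi 0 hb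

lemma integral_exp_neg_mul_Ioi {b : ℝ} (hb : 0 < b) :
    ∫ u in Ioi (0 : ℝ), exp (-(b * u)) = 1 / b := by
  simpa [neg_mul, neg_div_neg_eq] using integral_exp_mul_Ioi (neg_neg_iff_pos.2 hb) 0

lemma intervalIntegral_exp_neg_mul {u : ℝ} (hu : u ≠ 0) (a b : ℝ) :
    ∫ s in a..b, exp (-(s * u)) = (exp (-(a * u)) - exp (-(b * u))) / u := by
  simp_rw [← mul_neg]
  rw [intervalIntegral.integral_comp_mul_right (fun y => exp y) (neg_ne_zero.2 hu), integral_exp,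
    smul_eq_mul]
  field_simp
  ring

lemma exp_neg_mul_sub_exp_neg_mul_le (a b u : ℝ) :
    exp (-(a * u)) - exp (-(b * u)) ≤ (b - a) * u * exp (-(a * u)) := by
  have h : exp (-(b * u)) = exp (-(a * u)) * exp (-((b - a) * u)) := by
    rw [← exp_add]; ring_nf
  nlinarith [add_one_le_exp (-((b - a) * u)), exp_pos (-(a * u))]

lemma integrableOn_exp_neg_mul_sub_exp_neg_mul_div {a b : ℝ} (ha : 0 < a) (hb : 0 < b) :
    IntegrableOn (fun u => (exp (-(a * u)) - exp (-(b * u))) / u) (Ioi 0) := by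
  wlog hab : a ≤ b generalizing a b
  · convert (this hb ha (le_of_not_ge hab)).neg using 1
    ext u
    simp only [Pi.neg_apply]
    ring
  refine Integrable.mono' ((integrableOn_exp_neg_mul_Ioi ha).const_mul (b - a))
    (Measurable.aestronglyMeasurable (by fun_prop))
    (ae_restrict_of_forall_mem measurableSet_Ioi fun u (hu : 0 < u) => ?_)
  have hmono : exp (-(b * u)) ≤ exp (-(a * u)) := exp_le_exp.2 (by nlinarith)
  rw [norm_of_nonneg (div_nonneg (sub_nonneg.2 hmono) hu.le), div_le_iff₀ hu]
  linarith [exp_neg_mul_sub_exp_neg_mul_le a b u]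

lemma integral_exp_neg_mul_sub_exp_neg_mul_div {a b : ℝ} (ha : 0 < a) (hb : 0 < b) :
    ∫ u in Ioi 0, (exp (-(a * u)) - exp (-(b * u))) / u = log (b / a) := by
  have hcont : Continuous fun x : ℝ => exp (-x) := by fun_prop
  have h := Frullani.integral_Ioi_eq (L := 1) (R := 0)
    (hcont.locallyIntegrable.locallyIntegrableOn _) ha hb ?_ tendsto_exp_neg_atTop_nhds_zero ?_
  · simpa [inv_mul_eq_div] using h
  · simpa using (hcont.tendsto 0).mono_left nhdsWithin_le_nhds
  · simpa [inv_mul_eq_div] using integrableOn_exp_neg_mul_sub_exp_neg_mul_div ha hb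

lemma integral_mul_exp_neg_mul_sub_div_eq_intervalIntegral {f : ℝ → ℝ} {C a b : ℝ}
    (hf : Measurable f) (hbd : ∀ u, 0 < u → |f u| ≤ C) (ha : 0 < a) (hab : a ≤ b) :
    ∫ u in Ioi 0, f u * ((exp (-(a * u)) - exp (-(b * u))) / u)
      = ∫ s in a..b, ∫ u in Ioi 0, f u * exp (-(s * u)) := by
  have hint : Integrable (Function.uncurry fun u s => f u * exp (-(s * u)))
      ((volume.restrict (Ioi 0)).prod (volume.restrict (Ioc a b))) := by
    refine Integrable.mono' (((integrableOn_exp_neg_mul_Ioi ha).const_mul C).comp_fst _)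
      (by fun_prop) ?_
    rw [Measure.prod_restrict]
    refine ae_restrict_of_forall_mem (measurableSet_Ioi.prod measurableSet_Ioc) ?_
    rintro ⟨u, s⟩ ⟨hu, hs⟩
    simp only [mem_Ioi, mem_Ioc] at hu hs
    rw [Function.uncurry_apply_pair, norm_mul, norm_of_nonneg (exp_pos _).le, norm_eq_abs]
    exact mul_le_mul (hbd u hu) (exp_le_exp.2 (by nlinarith)) (exp_pos _).le
      ((abs_nonneg _).trans (hbd u hu))
  calc ∫ u in Ioi 0, f u * ((exp (-(a * u)) - exp (-(b * u))) / u)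
      = ∫ u in Ioi 0, ∫ s in Ioc a b, f u * exp (-(s * u)) := by
        refine setIntegral_congr_fun measurableSet_Ioi fun u (hu : 0 < u) => ?_
        rw [integral_const_mul, ← intervalIntegral.integral_of_le hab,
          intervalIntegral_exp_neg_mul hu.ne']
    _ = ∫ s in Ioc a b, ∫ u in Ioi 0, f u * exp (-(s * u)) := integral_integral_swap hint
    _ = ∫ s in a..b, ∫ u in Ioi 0, f u * exp (-(s * u)) :=
        (intervalIntegral.integral_of_le hab).symm

lemma two_sub_mul_exp_le_add_two {u : ℝ} (hu : 0 ≤ u) : (2 - u) * exp u ≤ u + 2 := by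
  let φ : ℝ → ℝ := fun x => x + 2 - (2 - x) * exp x
  have hφ : ∀ x, HasDerivAt φ (1 - (1 - x) * exp x) x := fun x => by
    have h : HasDerivAt φ (1 - (-1 * exp x + (2 - x) * exp x)) x :=
      ((hasDerivAt_id' x).add_const 2).sub
        (((hasDerivAt_id' x).const_sub 2).mul (hasDerivAt_exp x))
    exact h.congr_deriv (by ring)
  have hmono : MonotoneOn φ (Ici 0) := by
    refine monotoneOn_of_deriv_nonneg (convex_Ici 0) (by fun_prop)
      (fun x _ => (hφ x).differentiableAt.differentiableWithinAt) fun x _ => ?_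
    have h : (1 - x) * exp x ≤ exp (-x) * exp x :=
      mul_le_mul_of_nonneg_right (by linarith [add_one_le_exp (-x)]) (exp_pos x).le
    rw [← exp_add, neg_add_cancel, exp_zero] at h
    rw [(hφ x).deriv]
    linarith
  have := hmono self_mem_Ici hu hu
  simp only [φ, exp_zero] at this
  linarith

lemma eq_zero_of_add_one_eq_of_tendsto {f : ℝ → ℝ} {t : ℝ}
    (hf : ∀ x, t ≤ x → f (x + 1) = f x) (hlim : Tendsto f atTop (𝓝 0)) : f t = 0 := by
  have hconst : ∀ n : ℕ, f (t + n) = f t := by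
    intro n
    induction n with
    | zero => simp
    | succ n ih =>
      rw [Nat.cast_succ, ← add_assoc, hf _ (by simp), ih]
  refine tendsto_nhds_unique ?_
    (hlim.comp (tendsto_atTop_add_const_left _ t tendsto_natCast_atTop_atTop))
  simp [Function.comp_def, hconst]

lemma tendsto_add_mul_log_add_sub_log (c d : ℝ) :
    Tendsto (fun x => (x + c) * (log (x + d) - log x)) atTop (𝓝 d) := by
  have hlog : Tendsto (fun x : ℝ => log (1 + d / x)) atTop (𝓝 0) := by
    have h1 : Tendsto (fun x : ℝ => 1 + d / x) atTop (𝓝 1) := by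
      simpa using (tendsto_const_nhds (x := (1 : ℝ))).add
        ((tendsto_const_nhds (x := d)).div_atTop tendsto_id)
    rw [← log_one]
    exact (continuousAt_log one_ne_zero).tendsto.comp h1
  have h := (tendsto_mul_log_one_add_div_atTop d).add (hlog.const_mul c)
  rw [mul_zero, add_zero] at h
  refine h.congr' ((eventually_gt_atTop (max 0 (-d))).mono fun x hx => ?_)
  dsimp only
  have hx0 : 0 < x := (le_max_left _ _).trans_lt hx
  have hxd : 0 < x + d := by linarith [le_max_right 0 (-d)]
  rw [← log_div hxd.ne' hx0.ne', add_div, div_self hx0.ne']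
  ring

namespace Binet

noncomputable def kernel (u : ℝ) : ℝ := 1 / (exp u - 1) - 1 / u + 1 / 2

@[fun_prop]
lemma measurable_kernel : Measurable kernel := by
  unfold kernel
  fun_prop

variable {u : ℝ}

lemma kernel_nonneg (hu : 0 < u) : 0 ≤ kernel u := by
  have hE : 0 < exp u - 1 := by linarith [add_one_lt_exp hu.ne']
  have h : kernel u = (u + 2 - (2 - u) * exp u) / (2 * u * (exp u - 1)) := by
    rw [kernel]
    field_simp
    ring
  rw [h]
  exact div_nonneg (by linarith [two_sub_mul_exp_le_add_two hu.le]) (by positivity)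

lemma kernel_le_div_four (hu : 0 < u) : kernel u ≤ u / 4 := by
  have hq : u + u ^ 2 / 2 ≤ exp u - 1 := by linarith [quadratic_le_exp_of_nonneg hu.le]
  have h : 1 / (exp u - 1) ≤ 1 / (u + u ^ 2 / 2) := one_div_le_one_div_of_le (by positivity) hq
  have h' : 1 / (u + u ^ 2 / 2) - 1 / u + 1 / 2 = u / 4 - u ^ 2 / (4 * (u + 2)) := by
    field_simp
    ring
  have : 0 ≤ u ^ 2 / (4 * (u + 2)) := by positivity
  rw [kernel]
  linarith

lemma kernel_le_half (hu : 0 < u) : kernel u ≤ 1 / 2 := by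
  have h : 1 / (exp u - 1) ≤ 1 / u :=
    one_div_le_one_div_of_le hu (by linarith [add_one_le_exp u])
  rw [kernel]
  linarith

lemma norm_kernel_mul_exp_neg_mul_le {s : ℝ} (hu : 0 < u) :
    ‖kernel u * exp (-(s * u))‖ ≤ 1 / 2 * exp (-(s * u)) := by
  rw [norm_of_nonneg (mul_nonneg (kernel_nonneg hu) (exp_pos _).le)]
  exact mul_le_mul_of_nonneg_right (kernel_le_half hu) (exp_pos _).le

lemma norm_kernel_mul_exp_neg_mul_div_le {t : ℝ} (hu : 0 < u) :
    ‖kernel u * exp (-(t * u)) / u‖ ≤ 1 / 4 * exp (-(t * u)) := by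
  rw [norm_of_nonneg (by have := kernel_nonneg hu; positivity), div_le_iff₀ hu]
  nlinarith [kernel_le_div_four hu, exp_pos (-(t * u))]

lemma integrableOn_kernel_mul_exp_neg_mul {s : ℝ} (hs : 0 < s) :
    IntegrableOn (fun u => kernel u * exp (-(s * u))) (Ioi 0) :=
  Integrable.mono' ((integrableOn_exp_neg_mul_Ioi hs).const_mul _)
    (Measurable.aestronglyMeasurable (by fun_prop))
    (ae_restrict_of_forall_mem measurableSet_Ioi fun _ hu => norm_kernel_mul_exp_neg_mul_le hu)

lemma integrableOn_kernel_mul_exp_neg_mul_div {t : ℝ} (ht : 0 < t) :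
    IntegrableOn (fun u => kernel u * exp (-(t * u)) / u) (Ioi 0) :=
  Integrable.mono' ((integrableOn_exp_neg_mul_Ioi ht).const_mul _)
    (Measurable.aestronglyMeasurable (by fun_prop))
    (ae_restrict_of_forall_mem measurableSet_Ioi fun _ hu =>
      norm_kernel_mul_exp_neg_mul_div_le hu)

noncomputable def remainder (t : ℝ) : ℝ := ∫ u in Ioi 0, kernel u * exp (-(t * u)) / u

noncomputable def kernelLaplace (s : ℝ) : ℝ := ∫ u in Ioi 0, kernel u * exp (-(s * u))

noncomputable def remainderStep (t : ℝ) : ℝ := (t + 1 / 2) * (log (t + 1) - log t) - 1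

lemma abs_remainder_le {t : ℝ} (ht : 0 < t) : |remainder t| ≤ 1 / (4 * t) := by
  calc |remainder t| ≤ ∫ u in Ioi 0, 1 / 4 * exp (-(t * u)) :=
        norm_integral_le_of_norm_le ((integrableOn_exp_neg_mul_Ioi ht).const_mul _)
          (ae_restrict_of_forall_mem measurableSet_Ioi fun _ hu =>
            norm_kernel_mul_exp_neg_mul_div_le hu)
    _ = 1 / (4 * t) := by
        rw [integral_const_mul, integral_exp_neg_mul_Ioi ht]
        field_simp

lemma tendsto_remainder_atTop : Tendsto remainder atTop (𝓝 0) := by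
  refine squeeze_zero_norm' ((eventually_gt_atTop 0).mono fun t ht => abs_remainder_le ht) ?_
  exact tendsto_const_nhds.div_atTop (tendsto_id.const_mul_atTop four_pos)

lemma kernelLaplace_antitoneOn : AntitoneOn kernelLaplace (Ioi 0) :=
  fun x (hx : 0 < x) y _ hxy =>
    setIntegral_mono_on (integrableOn_kernel_mul_exp_neg_mul (hx.trans_le hxy))
      (integrableOn_kernel_mul_exp_neg_mul hx) measurableSet_Ioi fun u (hu : 0 < u) =>
        mul_le_mul_of_nonneg_left (exp_le_exp.2 (by nlinarith)) (kernel_nonneg hu)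

lemma intervalIntegrable_kernelLaplace {a b : ℝ} (ha : 0 < a) (hb : 0 < b) :
    IntervalIntegrable kernelLaplace volume a b :=
  (kernelLaplace_antitoneOn.mono fun _ hx => lt_of_lt_of_le (lt_min ha hb) hx.1).intervalIntegrable

lemma remainder_sub_remainder_add_one {t : ℝ} (ht : 0 < t) :
    remainder t - remainder (t + 1) = ∫ s in t..t + 1, kernelLaplace s := by
  calc remainder t - remainder (t + 1)
      = ∫ u in Ioi 0, kernel u * ((exp (-(t * u)) - exp (-((t + 1) * u))) / u) := by
        rw [remainder, remainder, ← integral_sub (integrableOn_kernel_mul_exp_neg_mul_div ht)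
          (integrableOn_kernel_mul_exp_neg_mul_div (by linarith))]
        exact setIntegral_congr_fun measurableSet_Ioi fun u _ => by ring
    _ = ∫ s in t..t + 1, kernelLaplace s :=
        integral_mul_exp_neg_mul_sub_div_eq_intervalIntegral measurable_kernel
          (fun u hu => abs_le.2 ⟨by linarith [kernel_nonneg hu], kernel_le_half hu⟩) ht
          (by linarith)

lemma kernelLaplace_sub_kernelLaplace_add_one {s : ℝ} (hs : 0 < s) :
    kernelLaplace s - kernelLaplace (s + 1)
      = 1 / (2 * s) + 1 / (2 * (s + 1)) - (log (s + 1) - log s) := by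
  have hs1 : 0 < s + 1 := by linarith
  -- multiplying the kernel by `1 - exp (-u)` leaves only elementary exponentials
  have hpt : ∀ u ∈ Ioi (0 : ℝ), kernel u * exp (-(s * u)) - kernel u * exp (-((s + 1) * u))
      = exp (-((s + 1) * u)) - (exp (-(s * u)) - exp (-((s + 1) * u))) / u
        + (exp (-(s * u)) - exp (-((s + 1) * u))) / 2 := fun u (hu : 0 < u) => by
    have hE : exp u - 1 ≠ 0 := by linarith [add_one_lt_exp hu.ne']
    have hshift : exp (-((s + 1) * u)) = exp (-(s * u)) / exp u := by
      rw [← exp_sub]; ring_nf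
    rw [hshift, kernel]
    field_simp
  have hF := integrableOn_exp_neg_mul_sub_exp_neg_mul_div hs hs1
  have hA : IntegrableOn (fun u => exp (-((s + 1) * u))
      - (exp (-(s * u)) - exp (-((s + 1) * u))) / u) (Ioi 0) :=
    (integrableOn_exp_neg_mul_Ioi hs1).sub hF
  have hB : IntegrableOn (fun u => (exp (-(s * u)) - exp (-((s + 1) * u))) / 2) (Ioi 0) :=
    ((integrableOn_exp_neg_mul_Ioi hs).sub (integrableOn_exp_neg_mul_Ioi hs1)).div_const 2
  rw [kernelLaplace, kernelLaplace, ← integral_sub (integrableOn_kernel_mul_exp_neg_mul hs)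
    (integrableOn_kernel_mul_exp_neg_mul hs1), setIntegral_congr_fun measurableSet_Ioi hpt,
    integral_add hA hB, integral_sub (integrableOn_exp_neg_mul_Ioi hs1) hF, integral_div,
    integral_sub (integrableOn_exp_neg_mul_Ioi hs) (integrableOn_exp_neg_mul_Ioi hs1),
    integral_exp_neg_mul_Ioi hs, integral_exp_neg_mul_Ioi hs1,
    integral_exp_neg_mul_sub_exp_neg_mul_div hs hs1, log_div hs1.ne' hs.ne']
  field_simp
  ring

lemma hasDerivAt_remainderStep {s : ℝ} (hs : 0 < s) :
    HasDerivAt remainderStep (log (s + 1) - log s - 1 / (2 * s) - 1 / (2 * (s + 1))) s := by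
  have hs1 : s + 1 ≠ 0 := by positivity
  have h : HasDerivAt remainderStep
      (1 * (log (s + 1) - log s) + (s + 1 / 2) * (1 / (s + 1) - s⁻¹)) s :=
    ((hasDerivAt_id' s).add_const _).mul
      ((((hasDerivAt_id' s).add_const 1).log hs1).sub (hasDerivAt_log hs.ne')) |>.sub_const 1
  refine h.congr_deriv ?_
  field_simp
  ring

lemma tendsto_remainderStep_atTop : Tendsto remainderStep atTop (𝓝 0) := by
  have h := (tendsto_add_mul_log_add_sub_log (1 / 2) 1).sub_const 1
  rwa [sub_self] at h

lemma remainder_second_difference {t : ℝ} (ht : 0 < t) :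
    (remainder t - remainder (t + 1)) - (remainder (t + 1) - remainder (t + 2))
      = remainderStep t - remainderStep (t + 1) := by
  have ht1 : 0 < t + 1 := by linarith
  have hK : IntervalIntegrable kernelLaplace volume t (t + 1) :=
    intervalIntegrable_kernelLaplace ht ht1
  have hK1 : IntervalIntegrable (fun s => kernelLaplace (s + 1)) volume t (t + 1) := by
    simpa using
      (intervalIntegrable_kernelLaplace ht1 (by linarith : 0 < t + 1 + 1)).comp_add_right 1
  have hderiv : ∀ s ∈ uIcc t (t + 1),
      HasDerivAt (fun x => -remainderStep x) (kernelLaplace s - kernelLaplace (s + 1)) s := by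
    intro s hs
    have hs0 : 0 < s := ht.trans_le (uIcc_of_le (by linarith : t ≤ t + 1) ▸ hs).1
    rw [kernelLaplace_sub_kernelLaplace_add_one hs0]
    exact (hasDerivAt_remainderStep hs0).neg.congr_deriv (by ring)
  have hFTC := intervalIntegral.integral_eq_sub_of_hasDerivAt hderiv (hK.sub hK1)
  rw [intervalIntegral.integral_sub hK hK1,
    intervalIntegral.integral_comp_add_right kernelLaplace 1,
    ← remainder_sub_remainder_add_one ht, ← remainder_sub_remainder_add_one ht1] at hFTC
  rw [show t + 2 = t + 1 + 1 by ring, hFTC]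
  ring

lemma remainder_sub_remainder_add_one_eq {t : ℝ} (ht : 0 < t) :
    remainder t - remainder (t + 1) = remainderStep t := by
  have hlim :
      Tendsto (fun x => remainder x - remainder (x + 1) - remainderStep x) atTop (𝓝 0) := by
    simpa using (tendsto_remainder_atTop.sub (tendsto_remainder_atTop.comp
      (tendsto_atTop_add_const_right _ 1 tendsto_id))).sub tendsto_remainderStep_atTop
  have h := eq_zero_of_add_one_eq_of_tendsto (t := t) (fun x hx => by
    have := remainder_second_difference (ht.trans_le hx)
    rw [show x + 1 + 1 = x + 2 by ring]
    linarith) hlim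
  exact sub_eq_zero.1 h

lemma sum_range_remainderStep (t : ℝ) (N : ℕ) :
    ∑ n ∈ Finset.range N, remainderStep (t + n)
      = (t + N + 1 / 2) * log (t + N) - (t + 1 / 2) * log t
        - ∑ m ∈ Finset.range N, log (t + m + 1) - N := by
  induction N with
  | zero => simp
  | succ N ih =>
    rw [Finset.sum_range_succ, Finset.sum_range_succ, ih, remainderStep]
    push_cast
    ring_nf

lemma sum_range_remainderStep_eq_logGammaSeq (t : ℝ) {N : ℕ} (hN : N ≠ 0) :
    ∑ n ∈ Finset.range N, remainderStep (t + n)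
      = BohrMollerup.logGammaSeq t N - (t - 1 / 2) * log t - log (Stirling.stirlingSeq N)
        - 1 / 2 * log 2 + (N + (t + 1 / 2)) * (log (N + t) - log N) := by
  have hN0 : (N : ℝ) ≠ 0 := Nat.cast_ne_zero.2 hN
  rw [sum_range_remainderStep, BohrMollerup.logGammaSeq, Stirling.log_stirlingSeq_formula,
    Finset.sum_range_succ', log_mul two_ne_zero hN0, log_div hN0 (exp_pos 1).ne', log_exp]
  push_cast
  simp only [add_zero, add_assoc, add_comm (N : ℝ) t]
  ring

lemma tendsto_sum_range_remainderStep {t : ℝ} (ht : 0 < t) :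
    Tendsto (fun N : ℕ => ∑ n ∈ Finset.range N, remainderStep (t + n)) atTop
      (𝓝 (log (Gamma t) - (t - 1 / 2) * log t + t - 1 / 2 * log (2 * π))) := by
  have hStirling : Tendsto (fun N : ℕ => log (Stirling.stirlingSeq N)) atTop
      (𝓝 (1 / 2 * log π)) := by
    have h := (continuousAt_log (sqrt_pos.2 pi_pos).ne').tendsto.comp
      Stirling.tendsto_stirlingSeq_sqrt_pi
    rwa [log_sqrt pi_pos.le, div_eq_inv_mul, ← one_div] at h
  have hlog := (tendsto_add_mul_log_add_sub_log (t + 1 / 2) t).comp tendsto_natCast_atTop_atTop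
  have h := ((((BohrMollerup.tendsto_log_gamma ht).sub_const ((t - 1 / 2) * log t)).sub
    hStirling).sub_const (1 / 2 * log 2)).add hlog
  rw [log_mul two_ne_zero pi_pos.ne']
  convert h.congr' ((eventually_ne_atTop 0).mono fun N hN =>
    (sum_range_remainderStep_eq_logGammaSeq t hN).symm) using 2
  ring

lemma remainder_eq_log_Gamma {t : ℝ} (ht : 0 < t) :
    remainder t = log (Gamma t) - (t - 1 / 2) * log t + t - 1 / 2 * log (2 * π) := by
  have htele : ∀ N : ℕ,
      ∑ n ∈ Finset.range N, remainderStep (t + n) = remainder t - remainder (t + N) := by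
    intro N
    have h := Finset.sum_range_sub' (fun n : ℕ => remainder (t + n)) N
    rw [Nat.cast_zero, add_zero] at h
    rw [← h]
    refine Finset.sum_congr rfl fun n _ => ?_
    rw [Nat.cast_succ, ← add_assoc, remainder_sub_remainder_add_one_eq (by positivity)]
  refine tendsto_nhds_unique ?_ (tendsto_sum_range_remainderStep ht)
  simp_rw [htele]
  simpa using tendsto_const_nhds.sub (tendsto_remainder_atTop.comp
    (tendsto_atTop_add_const_left _ t tendsto_natCast_atTop_atTop))

end Binet

theorem binet_type_integral (a t : ℝ) (ha : 0 < a) (ht : 0 < t) :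
    ∫ u in Set.Ioi (0 : ℝ),
        ((1 / (Real.exp u - 1) - 1 / u + 1 / 2) * Real.exp (-(t * u)) / u
          + (Real.exp (-(u * a)) - Real.exp (-(t * u))) / (2 * u))
      = Real.log (Real.Gamma t) - (t - 1 / 2) * Real.log t + t
          - (1 / 2) * Real.log (2 * π) + (1 / 2) * Real.log (t / a) := by
  have hsplit : ∀ u ∈ Ioi (0 : ℝ),
      (1 / (exp u - 1) - 1 / u + 1 / 2) * exp (-(t * u)) / u
          + (exp (-(u * a)) - exp (-(t * u))) / (2 * u)
        = Binet.kernel u * exp (-(t * u)) / u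
          + 1 / 2 * ((exp (-(a * u)) - exp (-(t * u))) / u) :=
    fun u _ => by rw [Binet.kernel, mul_comm u a]; ring
  rw [setIntegral_congr_fun measurableSet_Ioi hsplit,
    integral_add (Binet.integrableOn_kernel_mul_exp_neg_mul_div ht)
      ((integrableOn_exp_neg_mul_sub_exp_neg_mul_div ha ht).const_mul _),
    integral_const_mul, integral_exp_neg_mul_sub_exp_neg_mul_div ha ht, ← Binet.remainder,
    Binet.remainder_eq_log_Gamma ht]
end
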